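/- Let N be a symmetric (1+k)×(1+k) real matrix with N₂₂ negative definite and N|N₂₂ ≥ 0, and Γ := { γ ∈ ℝ^k : [1; γ]ᵀ N [1; γ] ≥ 0 }. Define U(b) := sup_{γ∈Γ} γᵀb - inf_{γ∈Γ} γᵀb for b ∈ ℝ^k. Then U(b) = 2·sqrt((N|N₂₂) · bᵀ(-N₂₂⁻¹)b). -/

import Mathlib

/-!
Completing the square turns `Γ` into the ellipsoid `(γ - c)ᵀ M (γ - c) ≤ N|N₂₂` with
`M = -N₂₂` and centre `c = -N₂₂⁻¹ N₂₁`. By Cauchy–Schwarz for the inner product given by `M`,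
the functional `γ ↦ γᵀ b` takes on this ellipsoid exactly the values `cᵀ b ± t` with
`|t| ≤ √((N|N₂₂) · bᵀ M⁻¹ b)`, the extremes being attained along the direction `M⁻¹ b`.
-/

open Matrix Set

namespace Matrix

variable {n : Type*} [Fintype n] [DecidableEq n]

theorem inv_neg {R : Type*} [CommRing R] (A : Matrix n n R) : (-A)⁻¹ = -A⁻¹ := by
  by_cases hA : IsUnit A.det
  · refine inv_eq_right_inv ?_
    rw [neg_mul_neg, mul_nonsing_inv A hA]
  · have hnegA : ¬IsUnit (-A).det := by
      rwa [← isUnit_iff_isUnit_det, IsUnit.neg_iff, isUnit_iff_isUnit_det]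
    rw [nonsing_inv_apply_not_isUnit A hA, nonsing_inv_apply_not_isUnit _ hnegA, neg_zero]

omit [DecidableEq n] in
theorem IsSymm.dotProduct_mulVec_comm {R : Type*} [CommSemiring R] {A : Matrix n n R}
    (hA : A.IsSymm) (u v : n → R) : u ⬝ᵥ A *ᵥ v = v ⬝ᵥ A *ᵥ u := by
  rw [dotProduct_mulVec, ← mulVec_transpose, hA.eq, dotProduct_comm]

theorem IsSymm.complete_square {R : Type*} [CommRing R] {A : Matrix n n R} (hA : A.IsSymm)
    (hdet : IsUnit A.det) (a : R) (v x : n → R) :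
    a + 2 * (v ⬝ᵥ x) + x ⬝ᵥ A *ᵥ x =
      (a - v ⬝ᵥ A⁻¹ *ᵥ v) + (x + A⁻¹ *ᵥ v) ⬝ᵥ A *ᵥ (x + A⁻¹ *ᵥ v) := by
  have hAv : A *ᵥ (A⁻¹ *ᵥ v) = v := by rw [mulVec_mulVec, mul_nonsing_inv A hdet, one_mulVec]
  have hcross : (A⁻¹ *ᵥ v) ⬝ᵥ A *ᵥ x = v ⬝ᵥ x := by
    rw [hA.dotProduct_mulVec_comm, hAv, dotProduct_comm]
  simp only [add_dotProduct, dotProduct_add, mulVec_add, hAv, hcross, dotProduct_comm _ v]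
  ring

theorem PosDef.dotProduct_sq_le {M : Matrix n n ℝ} (hM : M.PosDef) (x b : n → ℝ) :
    (x ⬝ᵥ b) ^ 2 ≤ (x ⬝ᵥ M *ᵥ x) * (b ⬝ᵥ M⁻¹ *ᵥ b) := by
  set w := M⁻¹ *ᵥ b
  have hMw : M *ᵥ w = b := by
    rw [mulVec_mulVec, mul_nonsing_inv M hM.det_pos.ne'.isUnit, one_mulVec]
  have hwb : w ⬝ᵥ b = b ⬝ᵥ w := dotProduct_comm _ _
  have hquad : ∀ t : ℝ,
      0 ≤ (b ⬝ᵥ w) * (t * t) + (-(2 * (x ⬝ᵥ b))) * t + x ⬝ᵥ M *ᵥ x := by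
    intro t
    have hnonneg := hM.posSemidef.dotProduct_mulVec_nonneg (x - t • w)
    have hsymm := (isHermitian_iff_isSymm.mp hM.isHermitian).dotProduct_mulVec_comm w x
    simp only [star_trivial, sub_dotProduct, dotProduct_sub, mulVec_sub, mulVec_smul,
      smul_dotProduct, dotProduct_smul, smul_eq_mul, hMw, hsymm, hwb] at hnonneg
    linarith
  have hdiscrim := discrim_le_zero hquad
  rw [discrim] at hdiscrim
  nlinarith

theorem PosDef.image_dotProduct_ellipsoid {M : Matrix n n ℝ} (hM : M.PosDef) {s : ℝ}
    (hs : 0 ≤ s) (c b : n → ℝ) :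
    (fun x => x ⬝ᵥ b) '' {x | (x - c) ⬝ᵥ M *ᵥ (x - c) ≤ s} =
      Icc (c ⬝ᵥ b - √(s * (b ⬝ᵥ M⁻¹ *ᵥ b)))
        (c ⬝ᵥ b + √(s * (b ⬝ᵥ M⁻¹ *ᵥ b))) := by
  set q := b ⬝ᵥ M⁻¹ *ᵥ b
  have hq : 0 ≤ q := by simpa using hM.inv.posSemidef.dotProduct_mulVec_nonneg b
  ext y
  rw [← mem_Icc_iff_abs_le]
  constructor
  · rintro ⟨x, hx, rfl⟩
    rw [abs_sub_comm, ← sub_dotProduct]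
    refine Real.abs_le_sqrt ((hM.dotProduct_sq_le _ b).trans ?_)
    exact mul_le_mul_of_nonneg_right hx hq
  · intro hy
    have hsq : (y - c ⬝ᵥ b) ^ 2 ≤ s * q := by
      rw [← sq_abs, abs_sub_comm, ← Real.sq_sqrt (mul_nonneg hs hq)]
      exact pow_le_pow_left₀ (abs_nonneg _) hy 2
    set w := M⁻¹ *ᵥ b
    have hMw : M *ᵥ w = b := by
      rw [mulVec_mulVec, mul_nonsing_inv M hM.det_pos.ne'.isUnit, one_mulVec]
    have hwb : w ⬝ᵥ b = q := dotProduct_comm _ _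
    have hyq : q = 0 → y - c ⬝ᵥ b = 0 := fun hq0 => by
      simpa [hq0] using hsq
    refine ⟨c + ((y - c ⬝ᵥ b) / q) • w, ?_, ?_⟩
    · simp only [mem_ofPred_eq, add_sub_cancel_left, mulVec_smul, smul_dotProduct,
        dotProduct_smul, hMw, hwb, smul_eq_mul]
      rcases hq.eq_or_lt with hq0 | hqpos
      · simp [← hq0, hs]
      · calc _ = (y - c ⬝ᵥ b) ^ 2 / q := by field_simp
          _ ≤ s := (div_le_iff₀ hqpos).mpr hsq
    · simp only [add_dotProduct, smul_dotProduct, hwb, smul_eq_mul, div_mul_cancel_of_imp hyq]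
      ring

end Matrix

/-- The uncertainty U(b) = sup_{γ∈Γ} γᵀb - inf_{γ∈Γ} γᵀb equals
2·√((N|N22)·bᵀ(-N22⁻¹)b). -/
theorem stmt5 {k : ℕ}
    (N11 : ℝ) (N21 : Fin k → ℝ) (N22 : Matrix (Fin k) (Fin k) ℝ)
    (hN22 : (-N22).PosDef)
    (hschur : 0 ≤ N11 - N21 ⬝ᵥ N22⁻¹.mulVec N21)
    (b : Fin k → ℝ) :
    let Γ : Set (Fin k → ℝ) :=
      {γ | 0 ≤ N11 + 2 * (N21 ⬝ᵥ γ) + γ ⬝ᵥ N22.mulVec γ}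
    sSup ((fun γ => γ ⬝ᵥ b) '' Γ) - sInf ((fun γ => γ ⬝ᵥ b) '' Γ) =
      2 * Real.sqrt ((N11 - N21 ⬝ᵥ N22⁻¹.mulVec N21) * (b ⬝ᵥ (-N22⁻¹).mulVec b)) := by
  intro Γ
  have hsymm : N22.IsSymm := by simpa using (isHermitian_iff_isSymm.mp hN22.isHermitian).neg
  have hdet : IsUnit N22.det :=
    (isUnit_iff_isUnit_det N22).mp ((IsUnit.neg_iff N22).mp hN22.isUnit)
  set c := -(N22⁻¹ *ᵥ N21)
  have hΓ :
      Γ = {γ | (γ - c) ⬝ᵥ (-N22) *ᵥ (γ - c) ≤ N11 - N21 ⬝ᵥ N22⁻¹ *ᵥ N21} := by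
    ext γ
    simp only [Γ, c, mem_ofPred_eq, hsymm.complete_square hdet, sub_neg_eq_add, neg_mulVec,
      dotProduct_neg, neg_le_iff_add_nonneg]
  have hr := Real.sqrt_nonneg ((N11 - N21 ⬝ᵥ N22⁻¹ *ᵥ N21) * (b ⬝ᵥ (-N22)⁻¹ *ᵥ b))
  rw [hΓ, hN22.image_dotProduct_ellipsoid hschur, csSup_Icc (by linarith), csInf_Icc (by linarith),
    Matrix.inv_neg]
  ring
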